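/- Let n ≥ 3 be an integer, κ1, κ2, κ3, κ₋₁, κ₋ ≥ 0, and let (p, q, r) be the global solution of the ODE system with admissible initial data (p0, q0, r0) ∈ (0,∞)³. Then for all t ≥ 0, r(t) ≥ (2/n) q(t) ≥ (2 q0 / n) · exp(−κ₋ t). -/

import Mathlib

/-- The right-hand side of the `p`-equation. -/
noncomputable def Fp (n : ℕ) (k1 k2 k3 km1 km p q r : ℝ) : ℝ :=
  (k1 - k3 * p) * (n * r - p - 2 * q)
    + km * q * (1 - (n - 1) * p / ((n - 2) * r)) - (k2 + km1) * p

/-- The right-hand side of the `q`-equation. -/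
noncomputable def Fq (n : ℕ) (k1 k2 k3 km1 km p q r : ℝ) : ℝ :=
  k2 * p + k3 * p * (n * r - p - 2 * q) - km * q

/-- The right-hand side of the `r`-equation. -/
noncomputable def Fr (n : ℕ) (k1 k2 k3 km1 km p q r : ℝ) : ℝ :=
  k2 * p - km * q * ((n * r - 2 * q) / ((n - 2) * r))

/-! The quantities `a = n r - p - 2 q` and `b = q - r` satisfy, along a positive solution, a linear
cooperative system `a' = α a + β b + u`, `b' = γ a + δ b` with `β, γ, u ≥ 0` and continuous
coefficients. Hence `V = min(a,0)² + min(b,0)²` obeys `V' ≤ K V` on compact time intervals, and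
Gronwall's inequality with `V(0) = 0` keeps `a` and `b` nonnegative. Then `n r ≥ p + 2 q ≥ 2 q`,
and `q' = κ₂ p + κ₃ p a - κ₋ q ≥ -κ₋ q` gives `q(t) ≥ q₀ e^{-κ₋ t}`. -/

open Set Filter Topology

theorem hasDerivAt_sq_min_zero (x : ℝ) :
    HasDerivAt (fun y : ℝ => min y 0 ^ 2) (2 * min x 0) x := by
  rcases lt_trichotomy x 0 with hx | rfl | hx
  · have hev : (fun y : ℝ => min y 0 ^ 2) =ᶠ[𝓝 x] fun y => y ^ 2 := by
      filter_upwards [Iio_mem_nhds hx] with y hy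
      rw [min_eq_left hy.le]
    rw [min_eq_left hx.le]
    simpa using (hasDerivAt_pow 2 x).congr_of_eventuallyEq hev
  · have hle : HasDerivWithinAt (fun y : ℝ => min y 0 ^ 2) 0 (Iic 0) 0 := by
      simpa using (hasDerivAt_pow 2 (0 : ℝ)).hasDerivWithinAt.congr_of_mem
        (fun y hy => by rw [min_eq_left (mem_Iic.1 hy)]) self_mem_Iic
    have hge : HasDerivWithinAt (fun y : ℝ => min y 0 ^ 2) 0 (Ici 0) 0 :=
      (hasDerivWithinAt_const (0 : ℝ) _ (0 : ℝ)).congr_of_mem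
        (fun y hy => by simp [min_eq_right (mem_Ici.1 hy)]) self_mem_Ici
    simpa [Iic_union_Ici] using hle.union hge
  · have hev : (fun y : ℝ => min y 0 ^ 2) =ᶠ[𝓝 x] fun _ => 0 := by
      filter_upwards [Ioi_mem_nhds hx] with y hy
      simp [min_eq_right (le_of_lt (mem_Ioi.1 hy))]
    rw [min_eq_right hx.le]
    simpa using (hasDerivAt_const x (0 : ℝ)).congr_of_eventuallyEq hev

theorem cooperative_min_zero_sq_deriv_le (α β γ δ u v a b : ℝ)
    (hβ : 0 ≤ β) (hγ : 0 ≤ γ) (hu : 0 ≤ u) (hv : 0 ≤ v) :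
    2 * min a 0 * (α * a + β * b + u) + 2 * min b 0 * (γ * a + δ * b + v) ≤
      (2 * |α| + 2 * |δ| + β + γ) * (min a 0 ^ 2 + min b 0 ^ 2) := by
  have ha : min a 0 * a = min a 0 ^ 2 := by
    rcases le_total a 0 with h | h <;> simp [h, sq]
  have hb : min b 0 * b = min b 0 ^ 2 := by
    rcases le_total b 0 with h | h <;> simp [h, sq]
  have hA : min a 0 ≤ 0 := min_le_right a 0
  have hB : min b 0 ≤ 0 := min_le_right b 0
  have hAb : min a 0 * b ≤ min a 0 * min b 0 := mul_le_mul_of_nonpos_left (min_le_left b 0) hA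
  have hBa : min b 0 * a ≤ min b 0 * min a 0 := mul_le_mul_of_nonpos_left (min_le_left a 0) hB
  have hAB : 2 * min a 0 * min b 0 ≤ min a 0 ^ 2 + min b 0 ^ 2 := two_mul_le_add_sq _ _
  have hα : α * min a 0 ^ 2 ≤ |α| * min a 0 ^ 2 := by gcongr; exact le_abs_self α
  have hδ : δ * min b 0 ^ 2 ≤ |δ| * min b 0 ^ 2 := by gcongr; exact le_abs_self δ
  calc 2 * min a 0 * (α * a + β * b + u) + 2 * min b 0 * (γ * a + δ * b + v)
      = 2 * (α * (min a 0 * a)) + 2 * (β * (min a 0 * b)) + 2 * (min a 0 * u)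
        + 2 * (γ * (min b 0 * a)) + 2 * (δ * (min b 0 * b)) + 2 * (min b 0 * v) := by ring
    _ ≤ 2 * (|α| * min a 0 ^ 2) + (β + γ) * (2 * min a 0 * min b 0)
          + 2 * (|δ| * min b 0 ^ 2) := by
      rw [ha, hb]
      nlinarith [mul_le_mul_of_nonneg_left hAb hβ, mul_le_mul_of_nonneg_left hBa hγ,
        mul_nonpos_of_nonpos_of_nonneg hA hu, mul_nonpos_of_nonpos_of_nonneg hB hv]
    _ ≤ (2 * |α| + 2 * |δ| + β + γ) * (min a 0 ^ 2 + min b 0 ^ 2) := by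
      nlinarith [mul_le_mul_of_nonneg_left hAB (add_nonneg hβ hγ),
        mul_nonneg (abs_nonneg α) (sq_nonneg (min b 0)),
        mul_nonneg (abs_nonneg δ) (sq_nonneg (min a 0))]

theorem cooperative_system_nonneg {a b α β γ δ u v : ℝ → ℝ}
    (hα : ContinuousOn α (Ici 0)) (hβ : ContinuousOn β (Ici 0))
    (hγ : ContinuousOn γ (Ici 0)) (hδ : ContinuousOn δ (Ici 0))
    (hβ_nonneg : ∀ t, 0 ≤ t → 0 ≤ β t) (hγ_nonneg : ∀ t, 0 ≤ t → 0 ≤ γ t)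
    (hu : ∀ t, 0 ≤ t → 0 ≤ u t) (hv : ∀ t, 0 ≤ t → 0 ≤ v t)
    (ha : ∀ t, 0 ≤ t → HasDerivAt a (α t * a t + β t * b t + u t) t)
    (hb : ∀ t, 0 ≤ t → HasDerivAt b (γ t * a t + δ t * b t + v t) t)
    (ha₀ : 0 ≤ a 0) (hb₀ : 0 ≤ b 0) :
    ∀ t, 0 ≤ t → 0 ≤ a t ∧ 0 ≤ b t := by
  intro T hT
  set V : ℝ → ℝ := fun s => min (a s) 0 ^ 2 + min (b s) 0 ^ 2
  set m : ℝ → ℝ := fun s => 2 * |α s| + 2 * |δ s| + β s + γ s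
  have hV' : ∀ s, 0 ≤ s → HasDerivAt V (2 * min (a s) 0 * (α s * a s + β s * b s + u s)
      + 2 * min (b s) 0 * (γ s * a s + δ s * b s + v s)) s := fun s hs =>
    ((hasDerivAt_sq_min_zero _).comp s (ha s hs)).add
      ((hasDerivAt_sq_min_zero _).comp s (hb s hs))
  have hm : ContinuousOn m (Icc 0 T) :=
    (by fun_prop : ContinuousOn m (Ici 0)).mono Icc_subset_Ici_self
  obtain ⟨K, hK⟩ := isCompact_Icc.exists_bound_of_continuousOn hm
  have hVT := le_gronwallBound_of_liminf_deriv_right_le (δ := 0) (K := K) (ε := 0)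
    (fun s hs => (hV' s hs.1).continuousAt.continuousWithinAt)
    (fun s hs r hr => (hV' s hs.1).hasDerivWithinAt.liminf_right_slope_le hr)
    (by simp [V, ha₀, hb₀])
    (fun s hs => by
      calc _ ≤ m s * V s := cooperative_min_zero_sq_deriv_le _ _ _ _ _ _ _ _
              (hβ_nonneg s hs.1) (hγ_nonneg s hs.1) (hu s hs.1) (hv s hs.1)
        _ ≤ K * V s + 0 := by
          rw [add_zero]
          exact mul_le_mul_of_nonneg_right ((le_abs_self _).trans (hK s (Ico_subset_Icc_self hs)))
            (by positivity))
    T (right_mem_Icc.2 hT)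
  rw [gronwallBound_ε0, zero_mul] at hVT
  have hsq : min (a T) 0 ^ 2 = 0 ∧ min (b T) 0 ^ 2 = 0 :=
    (add_eq_zero_iff_of_nonneg (sq_nonneg _) (sq_nonneg _)).1
      (le_antisymm hVT (by positivity))
  exact ⟨min_eq_right_iff.1 (pow_eq_zero_iff two_ne_zero |>.1 hsq.1),
    min_eq_right_iff.1 (pow_eq_zero_iff two_ne_zero |>.1 hsq.2)⟩

theorem mul_exp_neg_le_of_hasDerivAt {f f' : ℝ → ℝ} {c : ℝ}
    (hf : ∀ t, 0 ≤ t → HasDerivAt f (f' t) t) (hf' : ∀ t, 0 ≤ t → -c * f t ≤ f' t) :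
    ∀ t, 0 ≤ t → f 0 * Real.exp (-c * t) ≤ f t := by
  have hg : ∀ t, 0 ≤ t → HasDerivAt (fun s => f s * Real.exp (c * s))
      ((f' t + c * f t) * Real.exp (c * t)) t := fun t ht =>
    ((hf t ht).fun_mul (((hasDerivAt_id' t).const_mul c).exp)).congr_deriv (by ring)
  have hmono : MonotoneOn (fun s => f s * Real.exp (c * s)) (Ici 0) := by
    refine monotoneOn_of_hasDerivWithinAt_nonneg (convex_Ici 0)
      (fun t ht => (hg t ht).continuousAt.continuousWithinAt)
      (fun t ht => (hg t (le_of_lt (by simpa using ht))).hasDerivWithinAt) fun t ht => ?_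
    have ht : 0 ≤ t := le_of_lt (by simpa using ht)
    exact mul_nonneg (by linarith [hf' t ht]) (Real.exp_pos _).le
  intro t ht
  have h := hmono self_mem_Ici ht ht
  simp only [mul_zero, Real.exp_zero, mul_one] at h
  rw [neg_mul, Real.exp_neg, ← div_eq_mul_inv, div_le_iff₀ (Real.exp_pos _)]
  exact h

theorem Fq_sub_Fr (n : ℕ) (k1 k2 k3 km1 km p q r : ℝ)
    (hn : (n : ℝ) - 2 ≠ 0) (hr : r ≠ 0) :
    Fq n k1 k2 k3 km1 km p q r - Fr n k1 k2 k3 km1 km p q r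
      = k3 * p * (n * r - p - 2 * q) - 2 * km * q / ((n - 2) * r) * (q - r) := by
  simp only [Fq, Fr]
  field_simp
  ring

theorem nat_mul_Fr_sub_Fp_sub_two_mul_Fq (n : ℕ) (k1 k2 k3 km1 km p q r : ℝ)
    (hn : (n : ℝ) - 2 ≠ 0) (hr : r ≠ 0) :
    n * Fr n k1 k2 k3 km1 km p q r - Fp n k1 k2 k3 km1 km p q r - 2 * Fq n k1 k2 k3 km1 km p q r
      = -(k1 + k3 * p + km * q * (n - 1) / ((n - 2) * r)) * (n * r - p - 2 * q)
        + 2 * km * q / ((n - 2) * r) * (q - r) + ((n - 1) * k2 + km1) * p := by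
  simp only [Fp, Fq, Fr]
  field_simp
  ring

theorem admissible_of_hasDerivAt {n : ℕ} (hn : 3 ≤ n) {k1 k2 k3 km1 km : ℝ}
    (hk2 : 0 ≤ k2) (hk3 : 0 ≤ k3) (hkm1 : 0 ≤ km1) (hkm : 0 ≤ km) {p q r : ℝ → ℝ}
    (hode : ∀ t, 0 ≤ t →
      HasDerivAt p (Fp n k1 k2 k3 km1 km (p t) (q t) (r t)) t ∧
      HasDerivAt q (Fq n k1 k2 k3 km1 km (p t) (q t) (r t)) t ∧
      HasDerivAt r (Fr n k1 k2 k3 km1 km (p t) (q t) (r t)) t)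
    (hpos : ∀ t, 0 ≤ t → 0 < p t ∧ 0 < q t ∧ 0 < r t)
    (h₀ : 0 ≤ (n : ℝ) * r 0 - p 0 - 2 * q 0) (hrq₀ : r 0 ≤ q 0) :
    ∀ t, 0 ≤ t → 0 ≤ (n : ℝ) * r t - p t - 2 * q t ∧ r t ≤ q t := by
  have hn2 : (0 : ℝ) < n - 2 := by
    have : (3 : ℝ) ≤ n := by exact_mod_cast hn
    linarith
  have hp : ContinuousOn p (Ici 0) := fun s hs => (hode s hs).1.continuousAt.continuousWithinAt
  have hq : ContinuousOn q (Ici 0) := fun s hs => (hode s hs).2.1.continuousAt.continuousWithinAt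
  have hr : ContinuousOn r (Ici 0) := fun s hs => (hode s hs).2.2.continuousAt.continuousWithinAt
  have hden : ∀ s ∈ Ici (0 : ℝ), ((n : ℝ) - 2) * r s ≠ 0 := fun s hs =>
    (mul_pos hn2 (hpos s hs).2.2).ne'
  have hinv := cooperative_system_nonneg (a := fun s => (n : ℝ) * r s - p s - 2 * q s)
    (b := fun s => q s - r s)
    (α := fun s => -(k1 + k3 * p s + km * q s * (n - 1) / ((n - 2) * r s)))
    (β := fun s => 2 * km * q s / ((n - 2) * r s)) (γ := fun s => k3 * p s)
    (δ := fun s => -(2 * km * q s / ((n - 2) * r s)))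
    (u := fun s => ((n - 1) * k2 + km1) * p s) (v := fun _ => 0)
    (by fun_prop (disch := assumption)) (by fun_prop (disch := assumption))
    (by fun_prop) (by fun_prop (disch := assumption))
    (fun s hs => div_nonneg (by have := (hpos s hs).2.1; positivity)
      (mul_pos hn2 (hpos s hs).2.2).le)
    (fun s hs => mul_nonneg hk3 (hpos s hs).1.le)
    (fun s hs => mul_nonneg (by nlinarith) (hpos s hs).1.le) (fun _ _ => le_rfl)
    (fun s hs => ?_) (fun s hs => ?_) h₀ (sub_nonneg.2 hrq₀)
  · exact fun t ht => ⟨(hinv t ht).1, sub_nonneg.1 (hinv t ht).2⟩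
  · obtain ⟨hp', hq', hr'⟩ := hode s hs
    refine (((hr'.const_mul (n : ℝ)).sub hp').sub (hq'.const_mul 2)).congr_deriv ?_
    rw [nat_mul_Fr_sub_Fp_sub_two_mul_Fq n k1 k2 k3 km1 km _ _ _ hn2.ne' (hpos s hs).2.2.ne']
  · obtain ⟨hp', hq', hr'⟩ := hode s hs
    refine (hq'.sub hr').congr_deriv ?_
    rw [Fq_sub_Fr n k1 k2 k3 km1 km _ _ _ hn2.ne' (hpos s hs).2.2.ne']
    ring

theorem stmt_2_general (n : ℕ) (hn : 3 ≤ n) (k1 k2 k3 km1 km : ℝ)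
    (hk2 : 0 ≤ k2) (hk3 : 0 ≤ k3) (hkm1 : 0 ≤ km1) (hkm : 0 ≤ km)
    (p0 q0 r0 : ℝ)
    (hadm1 : 0 ≤ (n : ℝ) * r0 - p0 - 2 * q0) (hadm2 : r0 ≤ q0)
    (p q r : ℝ → ℝ)
    (hinit : p 0 = p0 ∧ q 0 = q0 ∧ r 0 = r0)
    (hode : ∀ t, 0 ≤ t →
      HasDerivAt p (Fp n k1 k2 k3 km1 km (p t) (q t) (r t)) t ∧
      HasDerivAt q (Fq n k1 k2 k3 km1 km (p t) (q t) (r t)) t ∧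
      HasDerivAt r (Fr n k1 k2 k3 km1 km (p t) (q t) (r t)) t)
    (hpos : ∀ t, 0 ≤ t → 0 < p t ∧ 0 < q t ∧ 0 < r t) :
    ∀ t, 0 ≤ t →
      2 / (n : ℝ) * q t ≤ r t ∧
      2 * q0 / (n : ℝ) * Real.exp (-km * t) ≤ 2 / (n : ℝ) * q t := by
  obtain ⟨rfl, rfl, rfl⟩ := hinit
  have hadm := admissible_of_hasDerivAt hn hk2 hk3 hkm1 hkm hode hpos hadm1 hadm2
  have hq_lower : ∀ t, 0 ≤ t → q 0 * Real.exp (-km * t) ≤ q t :=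
    mul_exp_neg_le_of_hasDerivAt (fun t ht => (hode t ht).2.1) fun t ht => by
      have := mul_nonneg (mul_nonneg hk3 (hpos t ht).1.le) (hadm t ht).1
      simp only [Fq]
      nlinarith [(hpos t ht).1]
  intro t ht
  have hn0 : (0 : ℝ) < n := by positivity
  constructor
  · rw [div_mul_eq_mul_div, div_le_iff₀ hn0]
    linarith [(hadm t ht).1, (hpos t ht).1]
  · rw [mul_div_right_comm, mul_assoc]
    exact mul_le_mul_of_nonneg_left (hq_lower t ht) (by positivity)

/-- Lower exponential bound: `r(t) ≥ (2/n) q(t) ≥ (2 q0 / n) exp (-κ₋ t)`. -/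
theorem stmt_2 (n : ℕ) (hn : 3 ≤ n) (k1 k2 k3 km1 km : ℝ)
    (hk1 : 0 ≤ k1) (hk2 : 0 ≤ k2) (hk3 : 0 ≤ k3) (hkm1 : 0 ≤ km1) (hkm : 0 ≤ km)
    (p0 q0 r0 : ℝ) (hp0 : 0 < p0) (hq0 : 0 < q0) (hr0 : 0 < r0)
    (hadm1 : 0 ≤ (n : ℝ) * r0 - p0 - 2 * q0) (hadm2 : r0 ≤ q0)
    (p q r : ℝ → ℝ)
    (hinit : p 0 = p0 ∧ q 0 = q0 ∧ r 0 = r0)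
    (hode : ∀ t, 0 ≤ t →
      HasDerivAt p (Fp n k1 k2 k3 km1 km (p t) (q t) (r t)) t ∧
      HasDerivAt q (Fq n k1 k2 k3 km1 km (p t) (q t) (r t)) t ∧
      HasDerivAt r (Fr n k1 k2 k3 km1 km (p t) (q t) (r t)) t)
    (hpos : ∀ t, 0 ≤ t → 0 < p t ∧ 0 < q t ∧ 0 < r t) :
    ∀ t, 0 ≤ t →
      2 / (n : ℝ) * q t ≤ r t ∧
      2 * q0 / (n : ℝ) * Real.exp (-km * t) ≤ 2 / (n : ℝ) * q t :=
  stmt_2_general n hn k1 k2 k3 km1 km hk2 hk3 hkm1 hkm p0 q0 r0 hadm1 hadm2 p q r hinit hode hpos
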